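/- Typed terms multiply inner products (two variables): given a valid typing judgment Δ, x:♯A, y:♯B ⊢ s⃗ : C, a substitution σ ∈ ⟦Δ⟧ and value distributions u⃗₁, u⃗₂ ∈ ⟦♯A⟧ and v⃗₁, v⃗₂ ∈ ⟦♯B⟧, there exist value distributions w⃗₁, w⃗₂ ∈ ⟦C⟧ such that s⃗⟨σ, x:=u⃗ⱼ, y:=v⃗ⱼ⟩ ≻≻ w⃗ⱼ for j = 1,2 and ⟨w⃗₁|w⃗₂⟩ = ⟨u⃗₁|u⃗₂⟩·⟨v⃗₁|v⃗₂⟩. -/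

import Mathlib

namespace LinAlg

/-! ### Syntax: pure values, pure terms, term distributions -/

mutual
inductive Val : Type where
  | var : ℕ → Val
  | lam : ℕ → Distr → Val
  | star : Val
  | pair : Val → Val → Val
  | inl : Val → Val
  | inr : Val → Val
inductive Term : Type where
  | val : Val → Term
  | app : Term → Term → Term
  | seq : Term → Distr → Term
  | letp : ℕ → ℕ → Term → Distr → Term
  | matc : Term → ℕ → Distr → ℕ → Distr → Term
inductive Distr : Type where
  | zero : Distr
  | single : Term → Distr
  | add : Distr → Distr → Distr
  | smul : ℂ → Distr → Distr
end

noncomputable instance : DecidableEq Val := fun _ _ => Classical.dec _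
noncomputable instance : DecidableEq Term := fun _ _ => Classical.dec _
noncomputable instance : DecidableEq Distr := fun _ _ => Classical.dec _

/-! ### The shallow congruence ≡ on term distributions -/

inductive Cong : Distr → Distr → Prop where
  | addZero (d : Distr) : Cong (d.add .zero) d
  | oneSmul (d : Distr) : Cong (Distr.smul 1 d) d
  | smulSmul (a b : ℂ) (d : Distr) : Cong (Distr.smul a (Distr.smul b d)) (Distr.smul (a * b) d)
  | addComm (d₁ d₂ : Distr) : Cong (d₁.add d₂) (d₂.add d₁)
  | addAssoc (d₁ d₂ d₃ : Distr) : Cong ((d₁.add d₂).add d₃) (d₁.add (d₂.add d₃))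
  | smulDistrib (a b : ℂ) (d : Distr) : Cong (Distr.smul (a + b) d) ((Distr.smul a d).add (Distr.smul b d))
  | smulAdd (a : ℂ) (d₁ d₂ : Distr) : Cong (Distr.smul a (d₁.add d₂)) ((Distr.smul a d₁).add (Distr.smul a d₂))
  | refl (d : Distr) : Cong d d
  | symm {d₁ d₂ : Distr} : Cong d₁ d₂ → Cong d₂ d₁
  | trans {d₁ d₂ d₃ : Distr} : Cong d₁ d₂ → Cong d₂ d₃ → Cong d₁ d₃
  | addCongr {d₁ d₁' d₂ d₂' : Distr} : Cong d₁ d₁' → Cong d₂ d₂' → Cong (d₁.add d₂) (d₁'.add d₂')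
  | smulCongr (a : ℂ) {d d' : Distr} : Cong d d' → Cong (Distr.smul a d) (Distr.smul a d')

/-! ### Free variables -/

mutual
def fvV : Val → Finset ℕ
  | .var y => {y}
  | .lam y b => fvD b \ {y}
  | .star => ∅
  | .pair v₁ v₂ => fvV v₁ ∪ fvV v₂
  | .inl v => fvV v
  | .inr v => fvV v
def fvT : Term → Finset ℕ
  | .val v => fvV v
  | .app s t => fvT s ∪ fvT t
  | .seq t s => fvT t ∪ fvD s
  | .letp y z t s => fvT t ∪ (fvD s \ {y, z})
  | .matc t y s₁ z s₂ => fvT t ∪ (fvD s₁ \ {y}) ∪ (fvD s₂ \ {z})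
def fvD : Distr → Finset ℕ
  | .zero => ∅
  | .single t => fvT t
  | .add d₁ d₂ => fvD d₁ ∪ fvD d₂
  | .smul _ d => fvD d
end

/-! ### Pure substitution -/

mutual
def substV (x : ℕ) (w : Val) : Val → Val
  | .var y => if y = x then w else .var y
  | .lam y b => if y = x then .lam y b else .lam y (substD x w b)
  | .star => .star
  | .pair v₁ v₂ => .pair (substV x w v₁) (substV x w v₂)
  | .inl v => .inl (substV x w v)
  | .inr v => .inr (substV x w v)
def substT (x : ℕ) (w : Val) : Term → Term
  | .val v => .val (substV x w v)
  | .app s t => .app (substT x w s) (substT x w t)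
  | .seq t s => .seq (substT x w t) (substD x w s)
  | .letp y z t s =>
      .letp y z (substT x w t) (if y = x ∨ z = x then s else substD x w s)
  | .matc t y s₁ z s₂ =>
      .matc (substT x w t) y (if y = x then s₁ else substD x w s₁)
        z (if z = x then s₂ else substD x w s₂)
def substD (x : ℕ) (w : Val) : Distr → Distr
  | .zero => .zero
  | .single t => .single (substT x w t)
  | .add d₁ d₂ => .add (substD x w d₁) (substD x w d₂)
  | .smul a d => .smul a (substD x w d)
end

/-! ### Linear extensions of the syntactic constructs -/

def appTD (s : Term) : Distr → Distr
  | .zero => .zero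
  | .single t => .single (.app s t)
  | .add d₁ d₂ => .add (appTD s d₁) (appTD s d₂)
  | .smul a d => .smul a (appTD s d)

def appDV : Distr → Val → Distr
  | .zero, _ => .zero
  | .single t, v => .single (.app t (.val v))
  | .add d₁ d₂, v => .add (appDV d₁ v) (appDV d₂ v)
  | .smul a d, v => .smul a (appDV d v)

def seqD : Distr → Distr → Distr
  | .zero, _ => .zero
  | .single t, s => .single (.seq t s)
  | .add d₁ d₂, s => .add (seqD d₁ s) (seqD d₂ s)
  | .smul a d, s => .smul a (seqD d s)

def letpD (x y : ℕ) : Distr → Distr → Distr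
  | .zero, _ => .zero
  | .single t, s => .single (.letp x y t s)
  | .add d₁ d₂, s => .add (letpD x y d₁ s) (letpD x y d₂ s)
  | .smul a d, s => .smul a (letpD x y d s)

def matcD : Distr → ℕ → Distr → ℕ → Distr → Distr
  | .zero, _, _, _, _ => .zero
  | .single t, y, s₁, z, s₂ => .single (.matc t y s₁ z s₂)
  | .add d₁ d₂, y, s₁, z, s₂ => .add (matcD d₁ y s₁ z s₂) (matcD d₂ y s₁ z s₂)
  | .smul a d, y, s₁, z, s₂ => .smul a (matcD d y s₁ z s₂)

/-- Bilinear application of distributions:  (Σᵢ αᵢ·tᵢ)(Σⱼ βⱼ·sⱼ) = Σᵢⱼ αᵢβⱼ·(tᵢ sⱼ). -/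
def appD : Distr → Distr → Distr
  | .zero, _ => .zero
  | .single t, w => appTD t w
  | .add d₁ d₂, w => .add (appD d₁ w) (appD d₂ w)
  | .smul a d, w => .smul a (appD d w)

/-- Bilinear substitution  d⟨x := w⃗⟩ = Σⱼ βⱼ · d[x := wⱼ]  (recursion on the value
distribution w⃗; non-value summands are junk and are sent to 0⃗). -/
def bsubst (x : ℕ) (d : Distr) : Distr → Distr
  | .zero => .zero
  | .single (.val w) => substD x w d
  | .single _ => .zero
  | .add w₁ w₂ => .add (bsubst x d w₁) (bsubst x d w₂)
  | .smul a w => .smul a (bsubst x d w)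

/-! ### Evaluation -/

inductive Atom : Term → Distr → Prop where
  | beta (x : ℕ) (b : Distr) (v : Val) :
      Atom (.app (.val (.lam x b)) (.val v)) (substD x v b)
  | seqStar (s : Distr) : Atom (.seq (.val .star) s) s
  | letPair (x y : ℕ) (v w : Val) (s : Distr) :
      Atom (.letp x y (.val (.pair v w)) s) (substD y w (substD x v s))
  | matchInl (v : Val) (y : ℕ) (s₁ : Distr) (z : ℕ) (s₂ : Distr) :
      Atom (.matc (.val (.inl v)) y s₁ z s₂) (substD y v s₁)
  | matchInr (v : Val) (y : ℕ) (s₁ : Distr) (z : ℕ) (s₂ : Distr) :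
      Atom (.matc (.val (.inr v)) y s₁ z s₂) (substD z v s₂)
  | appR (s : Term) {t : Term} {d : Distr} : Atom t d → Atom (.app s t) (appTD s d)
  | appL (v : Val) {t : Term} {d : Distr} : Atom t d → Atom (.app t (.val v)) (appDV d v)
  | seqC (s : Distr) {t : Term} {d : Distr} : Atom t d → Atom (.seq t s) (seqD d s)
  | letC (x y : ℕ) (s : Distr) {t : Term} {d : Distr} :
      Atom t d → Atom (.letp x y t s) (letpD x y d s)
  | matcC (y : ℕ) (s₁ : Distr) (z : ℕ) (s₂ : Distr) {t : Term} {d : Distr} :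
      Atom t d → Atom (.matc t y s₁ z s₂) (matcD d y s₁ z s₂)

/-- One-step evaluation:  t⃗ ≻ t⃗′. -/
def Step (d d' : Distr) : Prop :=
  ∃ (a : ℂ) (s : Term) (s' r : Distr),
    Cong d (Distr.add (.smul a (.single s)) r) ∧
    Cong d' (Distr.add (.smul a s') r) ∧ Atom s s'

/-- Evaluation  t⃗ ≻≻ t⃗′:  reflexive-transitive closure of one-step evaluation. -/
def Eval : Distr → Distr → Prop := Relation.ReflTransGen Step

/-! ### Value distributions, inner product, norm -/

def IsValT : Term → Prop
  | .val _ => True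
  | _ => False

def IsValD : Distr → Prop
  | .zero => True
  | .single t => IsValT t
  | .add d₁ d₂ => IsValD d₁ ∧ IsValD d₂
  | .smul _ d => IsValD d

/-- The set of closed value distributions. -/
def ClosedValD : Set Distr := {d | IsValD d ∧ fvD d = ∅}

/-- Total coefficient of the pure term `t` in the distribution `d`. -/
noncomputable def coeff : Distr → Term → ℂ
  | .zero, _ => 0
  | .single s, t => if s = t then 1 else 0
  | .add d₁ d₂, t => coeff d₁ t + coeff d₂ t
  | .smul a d, t => a * coeff d t

/-- The domain of a distribution (all pure terms occurring in it, even with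
coefficient 0). -/
noncomputable def domD : Distr → Finset Term
  | .zero => ∅
  | .single t => {t}
  | .add d₁ d₂ => domD d₁ ∪ domD d₂
  | .smul _ d => domD d

/-- The inner product ⟨v⃗|w⃗⟩ on value distributions. -/
noncomputable def innerD (v w : Distr) : ℂ :=
  ∑ t ∈ domD v, (starRingEnd ℂ) (coeff v t) * coeff w t

/-- The pseudo-ℓ²-norm ‖v⃗‖. -/
noncomputable def normD (v : Distr) : ℝ := Real.sqrt (innerD v v).re

/-- The unit sphere S of closed value distributions of norm 1. -/
def Sphere : Set Distr := {d | d ∈ ClosedValD ∧ normD d = 1}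

/-- Span(X): weak linear combinations of elements of X (taken modulo ≡). -/
inductive Span (X : Set Distr) : Distr → Prop where
  | mem {d : Distr} : d ∈ X → Span X d
  | zero : Span X .zero
  | add {d₁ d₂ : Distr} : Span X d₁ → Span X d₂ → Span X (d₁.add d₂)
  | smul (a : ℂ) {d : Distr} : Span X d → Span X (Distr.smul a d)
  | congr {d d' : Distr} : Span X d → Cong d d' → Span X d'

/-! ### Realizability: unitary types -/

/-- t⃗ ⊩ A :  t⃗ evaluates to some vector of ⟦A⟧. -/
def Realizes (A : Set Distr) (t : Distr) : Prop := ∃ v ∈ A, Eval t v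

/-- |A| : the set of (closed) realizers of A. -/
def realizersOf (A : Set Distr) : Set Distr := {t | fvD t = ∅ ∧ Realizes A t}

/-! ### Type constructors -/

def UnitT : Set Distr := {Distr.single (.val .star)}

/-- ♭A : the basis of A. -/
def flatT (X : Set Distr) : Set Distr :=
  {e | ∃ d ∈ X, ∃ v : Val, (Term.val v) ∈ domD d ∧ e = Distr.single (.val v)}

/-- ♯A : the unitary span of A. -/
def sharpT (X : Set Distr) : Set Distr := {d | Span X d ∧ d ∈ Sphere}

/-- Linear extension of a value constructor. -/
def mapVD (f : Val → Val) : Distr → Distr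
  | .zero => .zero
  | .single (.val v) => .single (.val (f v))
  | .single t => .single t
  | .add d₁ d₂ => .add (mapVD f d₁) (mapVD f d₂)
  | .smul a d => .smul a (mapVD f d)

def inlD : Distr → Distr := mapVD Val.inl
def inrD : Distr → Distr := mapVD Val.inr

/-- Bilinear extension of pairing. -/
def pairD : Distr → Distr → Distr
  | .zero, _ => .zero
  | .single (.val v), w => mapVD (Val.pair v) w
  | .single t, _ => .single t
  | .add d₁ d₂, w => .add (pairD d₁ w) (pairD d₂ w)
  | .smul a d, w => .smul a (pairD d w)

/-- A + B (simple sum). -/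
def plusT (A B : Set Distr) : Set Distr :=
  {d | (∃ v ∈ A, d = inlD v) ∨ (∃ w ∈ B, d = inrD w)}

/-- A × B (simple product). -/
def timesT (A B : Set Distr) : Set Distr :=
  {d | ∃ v ∈ A, ∃ w ∈ B, d = pairD v w}

/-- A → B (pure arrow). -/
def arrowT (A B : Set Distr) : Set Distr :=
  {d | ∃ (x : ℕ) (b : Distr), d = Distr.single (.val (.lam x b)) ∧ fvD d = ∅ ∧
      ∀ v ∈ A, Realizes B (bsubst x b v)}

/-- Σᵢ αᵢ · λx.t⃗ᵢ  ↦  Σᵢ αᵢ · t⃗ᵢ  (strips the λx in front of each summand). -/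
def stripLam (x : ℕ) : Distr → Distr
  | .zero => .zero
  | .single (.val (.lam y b)) => if y = x then b else .single (.val (.lam y b))
  | .single t => .single t
  | .add d₁ d₂ => .add (stripLam x d₁) (stripLam x d₂)
  | .smul a d => .smul a (stripLam x d)

/-- A ⇒ B (unitary arrow). -/
def uarrowT (A B : Set Distr) : Set Distr :=
  {d | d ∈ Sphere ∧ ∃ x : ℕ,
      (∀ t ∈ domD d, ∃ b : Distr, t = Term.val (.lam x b)) ∧
      ∀ v ∈ A, Realizes B (bsubst x (stripLam x d) v)}

/-! ### Booleans -/

def ttD : Distr := .single (.val (.inl .star))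
def ffD : Distr := .single (.val (.inr .star))

/-- 𝔹 = 𝕌 + 𝕌. -/
def BoolT : Set Distr := plusT UnitT UnitT

/-- ♯𝔹, the type of unitary Booleans. -/
def sharpBool : Set Distr := sharpT BoolT

/-- Boolean projection π : Span({tt,ff}) → ℂ². -/
noncomputable def piB (d : Distr) : ℂ × ℂ :=
  (coeff d (.val (.inl .star)), coeff d (.val (.inr .star)))

/-- t⃗ represents the operator F : ℂ² → ℂ². -/
def Represents (td : Distr) (F : ℂ × ℂ → ℂ × ℂ) : Prop :=
  ∀ v, Span BoolT v → ∃ w, Span BoolT w ∧ Eval (appD td v) w ∧ piB w = F (piB v)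

/-- Hermitian inner product on ℂ². -/
def hinner (u v : ℂ × ℂ) : ℂ :=
  (starRingEnd ℂ) u.1 * v.1 + (starRingEnd ℂ) u.2 * v.2

/-- A unitary operator on ℂ². -/
def IsUnitaryOp (F : ℂ × ℂ → ℂ × ℂ) : Prop :=
  ∀ u v : ℂ × ℂ, hinner (F u) (F v) = hinner u v

/-! ### Typing contexts, substitutions, judgments -/

abbrev Ctx := List (ℕ × Set Distr)
abbrev Subst := List (ℕ × Distr)

/-- Applying a substitution, one bilinear substitution at a time. -/
def applySub : Distr → Subst → Distr
  | d, [] => d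
  | d, (x, w) :: σ => applySub (bsubst x d w) σ

/-- σ ∈ ⟦Γ⟧. -/
def SubMem (σ : Subst) (Γ : Ctx) : Prop :=
  List.Forall₂ (fun p q => p.1 = q.1 ∧ p.2 ∈ q.2) σ Γ

def ctxDom (Γ : Ctx) : Set ℕ := {x | ∃ A, (x, A) ∈ Γ}

/-- dom♯(Γ): the variables of Γ whose type is not a pure-value type. -/
def ctxDomSharp (Γ : Ctx) : Set ℕ := {x | ∃ A, (x, A) ∈ Γ ∧ flatT A ≠ A}

/-- All the types of the context are unitary types (subsets of the sphere). -/
def CtxUnitary (Γ : Ctx) : Prop := ∀ p ∈ Γ, p.2 ⊆ Sphere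

/-- Validity of the typing judgment  Γ ⊢ t⃗ : A. -/
def ValidJ (Γ : Ctx) (t : Distr) (A : Set Distr) : Prop :=
  ctxDomSharp Γ ⊆ (fvD t : Set ℕ) ∧ (fvD t : Set ℕ) ⊆ ctxDom Γ ∧
  ∀ σ : Subst, SubMem σ Γ → Realizes A (applySub t σ)

/-- Validity of the orthogonality judgment  Γ | Δ₁ ⊢ t⃗₁ ⊥ Δ₂ ⊢ t⃗₂ : A. -/
def OrthoJ (Γ Δ₁ Δ₂ : Ctx) (t₁ t₂ : Distr) (A : Set Distr) : Prop :=
  ValidJ (Γ ++ Δ₁) t₁ A ∧ ValidJ (Γ ++ Δ₂) t₂ A ∧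
  ∀ σ σ₁ σ₂ : Subst, SubMem σ Γ → SubMem σ₁ Δ₁ → SubMem σ₂ Δ₂ →
    ∀ v₁ v₂ : Distr, v₁ ∈ ClosedValD → v₂ ∈ ClosedValD →
      Eval (applySub t₁ (σ ++ σ₁)) v₁ → Eval (applySub t₂ (σ ++ σ₂)) v₂ →
      innerD v₁ v₂ = 0

end LinAlg

/-! Evaluation is deterministic up to coefficients (every evaluation to a value is eventually
matched by iterated complete development) and commutes with linear combinations. So for fixed
`u` the map `v ↦ s⟨σ, x := u, y := v⟩` is linear and sends the unit vectors of `♯B` into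
`C ⊆ S`; evaluating it on the normalised combinations `(v₁ + α v₂)/c` with `|α| = 1` and
polarising shows that it preserves inner products. The same polarisation in `u`, now with
`⟨v₁|v₂⟩` as the value on the diagonal, gives `⟨w₁|w₂⟩ = ⟨u₁|u₂⟩ ⟨v₁|v₂⟩`. -/

namespace LinAlg

open ComplexConjugate

theorem cong_smul_zero (a : ℂ) : Cong (Distr.smul a .zero) .zero := by
  have h₀ : Cong .zero (Distr.smul 0 .zero) := by
    have h := Cong.smulDistrib 1 0 Distr.zero
    rw [add_zero] at h
    exact (Cong.oneSmul _).symm.trans <| h.trans <|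
      (Cong.addCongr (Cong.oneSmul _) (Cong.refl _)).trans <|
      (Cong.addComm _ _).trans (Cong.addZero _)
  have h := Cong.smulSmul a 0 Distr.zero
  rw [mul_zero] at h
  exact (Cong.smulCongr a h₀).trans (h.trans h₀.symm)

theorem cong_add_add_add_comm (d₁ d₂ d₃ d₄ : Distr) :
    Cong ((d₁.add d₂).add (d₃.add d₄)) ((d₁.add d₃).add (d₂.add d₄)) := by
  refine (Cong.addAssoc _ _ _).trans <|
    (Cong.addCongr (Cong.refl d₁) ?_).trans (Cong.addAssoc _ _ _).symm
  exact (Cong.addAssoc _ _ _).symm.trans <|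
    (Cong.addCongr (Cong.addComm _ _) (Cong.refl _)).trans (Cong.addAssoc _ _ _)

theorem Cong.coeff_eq {d d' : Distr} (h : Cong d d') (t : Term) : coeff d t = coeff d' t := by
  induction h with
  | refl => rfl
  | symm _ ih => exact ih.symm
  | trans _ _ ih₁ ih₂ => exact ih₁.trans ih₂
  | addCongr _ _ ih₁ ih₂ => simp only [coeff, ih₁, ih₂]
  | smulCongr _ _ ih => simp only [coeff, ih]
  | _ => simp only [coeff]; ring

theorem Cong.isValD_iff {d d' : Distr} (h : Cong d d') : IsValD d ↔ IsValD d' := by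
  induction h with
  | refl => rfl
  | symm _ ih => exact ih.symm
  | trans _ _ ih₁ ih₂ => exact ih₁.trans ih₂
  | addCongr _ _ ih₁ ih₂ => simp only [IsValD, ih₁, ih₂]
  | smulCongr _ _ ih => simpa only [IsValD] using ih
  | _ => simp only [IsValD] <;> tauto

/-- Complete development: every redex of every summand is contracted at once. -/
def parStepT : Term → Distr
  | .val v => .single (.val v)
  | .app (.val (.lam x b)) (.val v) => substD x v b
  | .app (.val v') (.val v) => .single (.app (.val v') (.val v))
  | .app s (.val v) => appDV (parStepT s) v
  | .app s t => appTD s (parStepT t)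
  | .seq (.val .star) r => r
  | .seq (.val v) r => .single (.seq (.val v) r)
  | .seq t r => seqD (parStepT t) r
  | .letp x y (.val (.pair v w)) r => substD y w (substD x v r)
  | .letp x y (.val v) r => .single (.letp x y (.val v) r)
  | .letp x y t r => letpD x y (parStepT t) r
  | .matc (.val (.inl v)) y s₁ _ _ => substD y v s₁
  | .matc (.val (.inr v)) _ _ z s₂ => substD z v s₂
  | .matc (.val v) y s₁ z s₂ => .single (.matc (.val v) y s₁ z s₂)
  | .matc t y s₁ z s₂ => matcD (parStepT t) y s₁ z s₂

def parStep : Distr → Distr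
  | .zero => .zero
  | .single t => parStepT t
  | .add d₁ d₂ => .add (parStep d₁) (parStep d₂)
  | .smul a d => .smul a (parStep d)

theorem parStepT_of_atom {s : Term} {d : Distr} (h : Atom s d) : parStepT s = d := by
  induction h <;> try rfl
  all_goals
    rename_i t _ h ih
    cases t <;> first | simp only [parStepT, ih] | cases h

theorem parStep_of_isValD : ∀ {d : Distr}, IsValD d → parStep d = d
  | .zero, _ => rfl
  | .single (.val _), _ => rfl
  | .add _ _, h => congrArg₂ Distr.add (parStep_of_isValD h.1) (parStep_of_isValD h.2)
  | .smul a _, h => congrArg (Distr.smul a) (parStep_of_isValD (d := _) h)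

theorem Cong.map_parStep {d d' : Distr} (h : Cong d d') : Cong (parStep d) (parStep d') := by
  induction h with
  | addZero => exact Cong.addZero _
  | oneSmul => exact Cong.oneSmul _
  | smulSmul => exact Cong.smulSmul _ _ _
  | addComm => exact Cong.addComm _ _
  | addAssoc => exact Cong.addAssoc _ _ _
  | smulDistrib => exact Cong.smulDistrib _ _ _
  | smulAdd => exact Cong.smulAdd _ _ _
  | refl => exact Cong.refl _
  | symm _ ih => exact ih.symm
  | trans _ _ ih₁ ih₂ => exact ih₁.trans ih₂
  | addCongr _ _ ih₁ ih₂ => exact Cong.addCongr ih₁ ih₂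
  | smulCongr a _ ih => exact Cong.smulCongr a ih

theorem Cong.map_parStep_iterate {d d' : Distr} (h : Cong d d') (n : ℕ) :
    Cong (parStep^[n] d) (parStep^[n] d') := by
  induction n generalizing d d' with
  | zero => exact h
  | succ n ih => exact ih h.map_parStep

theorem parStep_iterate_add (n : ℕ) (d₁ d₂ : Distr) :
    parStep^[n] (d₁.add d₂) = (parStep^[n] d₁).add (parStep^[n] d₂) := by
  induction n generalizing d₁ d₂ with
  | zero => rfl
  | succ n ih => exact ih _ _

theorem parStep_iterate_smul (n : ℕ) (a : ℂ) (d : Distr) :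
    parStep^[n] (Distr.smul a d) = Distr.smul a (parStep^[n] d) := by
  induction n generalizing d with
  | zero => rfl
  | succ n ih => exact ih _

/-- Once `d'` has been developed into a value, developing `d ≻ d'` once more catches up: the
contracted summand is one development ahead and the other summands have stopped moving. -/
theorem Step.parStep_iterate_succ {d d' : Distr} (hs : Step d d') {m : ℕ}
    (hval : IsValD (parStep^[m] d')) : Cong (parStep^[m + 1] d) (parStep^[m] d') := by
  obtain ⟨a, s, s', r, hd, hd', hat⟩ := hs
  have hd'm := hd'.map_parStep_iterate m
  rw [parStep_iterate_add, parStep_iterate_smul] at hd'm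
  have hr : IsValD (parStep^[m] r) := (hd'm.isValD_iff.mp hval).2
  have hs₁ : parStep^[m + 1] (Distr.single s) = parStep^[m] s' :=
    congrArg (parStep^[m]) (parStepT_of_atom hat)
  have hr₁ : parStep^[m + 1] r = parStep^[m] r := by
    rw [Function.iterate_succ_apply', parStep_of_isValD hr]
  have hdm := hd.map_parStep_iterate (m + 1)
  rw [parStep_iterate_add, parStep_iterate_smul, hs₁, hr₁] at hdm
  exact hdm.trans hd'm.symm

theorem Eval.eventually_parStep_iterate {d v : Distr} (he : Eval d v) (hv : IsValD v) :
    ∀ᶠ n in Filter.atTop, IsValD (parStep^[n] d) ∧ ∀ t, coeff (parStep^[n] d) t = coeff v t := by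
  induction he using Relation.ReflTransGen.head_induction_on with
  | refl =>
    refine Filter.Eventually.of_forall fun n => ?_
    rw [Function.iterate_fixed (parStep_of_isValD hv)]
    exact ⟨hv, fun _ => rfl⟩
  | head hs _ ih =>
    obtain ⟨N, hN⟩ := Filter.eventually_atTop.mp ih
    refine Filter.eventually_atTop.mpr ⟨N + 1, fun n hn => ?_⟩
    obtain ⟨m, rfl⟩ : ∃ m, n = m + 1 := ⟨n - 1, by omega⟩
    obtain ⟨hval, hcoeff⟩ := hN m (by omega)
    have hc := hs.parStep_iterate_succ hval
    exact ⟨hc.isValD_iff.mpr hval, fun t => (hc.coeff_eq t).trans (hcoeff t)⟩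

theorem Eval.coeff_eq {d v v' : Distr} (he : Eval d v) (he' : Eval d v') (hv : IsValD v)
    (hv' : IsValD v') (t : Term) : coeff v t = coeff v' t := by
  obtain ⟨n, ⟨-, hn⟩, -, hn'⟩ := ((he.eventually_parStep_iterate hv).and
    (he'.eventually_parStep_iterate hv')).exists
  rw [← hn, hn']

theorem Step.add_right {d d' : Distr} (h : Step d d') (r : Distr) : Step (d.add r) (d'.add r) := by
  obtain ⟨a, s, s', r₀, h₁, h₂, hat⟩ := h
  exact ⟨a, s, s', r₀.add r, (Cong.addCongr h₁ (Cong.refl r)).trans (Cong.addAssoc _ _ _),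
    (Cong.addCongr h₂ (Cong.refl r)).trans (Cong.addAssoc _ _ _), hat⟩

theorem Step.add_left {d d' : Distr} (h : Step d d') (r : Distr) : Step (r.add d) (r.add d') := by
  obtain ⟨a, s, s', r₀, h₁, h₂, hat⟩ := h
  exact ⟨a, s, s', r₀.add r,
    ((Cong.addComm _ _).trans (Cong.addCongr h₁ (Cong.refl r))).trans (Cong.addAssoc _ _ _),
    ((Cong.addComm _ _).trans (Cong.addCongr h₂ (Cong.refl r))).trans (Cong.addAssoc _ _ _), hat⟩

theorem Step.smul {d d' : Distr} (h : Step d d') (c : ℂ) :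
    Step (Distr.smul c d) (Distr.smul c d') := by
  obtain ⟨a, s, s', r, h₁, h₂, hat⟩ := h
  have hsmul {e e' : Distr} (he : Cong e ((Distr.smul a e').add r)) :
      Cong (Distr.smul c e) ((Distr.smul (c * a) e').add (Distr.smul c r)) :=
    ((Cong.smulCongr c he).trans (Cong.smulAdd c _ _)).trans
      (Cong.addCongr (Cong.smulSmul c a _) (Cong.refl _))
  exact ⟨c * a, s, s', Distr.smul c r, hsmul h₁, hsmul h₂, hat⟩

theorem Eval.add_right {d d' : Distr} (h : Eval d d') (r : Distr) : Eval (d.add r) (d'.add r) := by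
  induction h with
  | refl => exact .refl
  | tail _ hs ih => exact ih.tail (hs.add_right r)

theorem Eval.add_left {d d' : Distr} (h : Eval d d') (r : Distr) : Eval (r.add d) (r.add d') := by
  induction h with
  | refl => exact .refl
  | tail _ hs ih => exact ih.tail (hs.add_left r)

theorem Eval.smul {d d' : Distr} (h : Eval d d') (c : ℂ) :
    Eval (Distr.smul c d) (Distr.smul c d') := by
  induction h with
  | refl => exact .refl
  | tail _ hs ih => exact ih.tail (hs.smul c)

theorem Eval.combo {d₁ d₂ w₁ w₂ : Distr} (h₁ : Eval d₁ w₁) (h₂ : Eval d₂ w₂) (a b : ℂ) :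
    Eval ((Distr.smul a d₁).add (Distr.smul b d₂)) ((Distr.smul a w₁).add (Distr.smul b w₂)) :=
  ((h₁.smul a).add_right _).trans ((h₂.smul b).add_left _)

/-- `≻≻` is not closed under `≡` on the left (a value has no step), only up to coefficients. -/
theorem Eval.exists_of_cong {c d w : Distr} (h : Cong c d) (he : Eval d w) (hw : IsValD w) :
    ∃ w', IsValD w' ∧ Eval c w' ∧ ∀ t, coeff w' t = coeff w t := by
  rcases Relation.ReflTransGen.cases_head he with rfl | ⟨d₁, ⟨a, s, s', r, h₁, h₂, hat⟩, he₁⟩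
  · exact ⟨c, h.isValD_iff.mpr hw, .refl, h.coeff_eq⟩
  · exact ⟨w, hw, .head ⟨a, s, s', r, h.trans h₁, h₂, hat⟩ he₁, fun _ => rfl⟩

def CongLinear (T : Distr → Distr) : Prop :=
  ∀ (a b : ℂ) (u₁ u₂ : Distr),
    Cong (T ((Distr.smul a u₁).add (Distr.smul b u₂)))
      ((Distr.smul a (T u₁)).add (Distr.smul b (T u₂)))

theorem congLinear_bsubst (x : ℕ) (d : Distr) : CongLinear (bsubst x d) :=
  fun _ _ _ _ => Cong.refl _

theorem bsubst_add (x : ℕ) (d₁ d₂ : Distr) :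
    ∀ v : Distr, Cong (bsubst x (d₁.add d₂) v) ((bsubst x d₁ v).add (bsubst x d₂ v))
  | .zero => (Cong.addZero _).symm
  | .single (.val _) => Cong.refl _
  | .single (.app _ _) | .single (.seq _ _) | .single (.letp _ _ _ _) | .single (.matc _ _ _ _ _) =>
      (Cong.addZero _).symm
  | .add v₁ v₂ =>
      (Cong.addCongr (bsubst_add x d₁ d₂ v₁) (bsubst_add x d₁ d₂ v₂)).trans
        (cong_add_add_add_comm _ _ _ _)
  | .smul a v => (Cong.smulCongr a (bsubst_add x d₁ d₂ v)).trans (Cong.smulAdd a _ _)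

theorem bsubst_smul (x : ℕ) (c : ℂ) (d : Distr) :
    ∀ v : Distr, Cong (bsubst x (Distr.smul c d) v) (Distr.smul c (bsubst x d v))
  | .zero => (cong_smul_zero c).symm
  | .single (.val _) => Cong.refl _
  | .single (.app _ _) | .single (.seq _ _) | .single (.letp _ _ _ _) | .single (.matc _ _ _ _ _) =>
      (cong_smul_zero c).symm
  | .add v₁ v₂ =>
      (Cong.addCongr (bsubst_smul x c d v₁) (bsubst_smul x c d v₂)).trans (Cong.smulAdd c _ _).symm
  | .smul a v => by
      refine (Cong.smulCongr a (bsubst_smul x c d v)).trans ((Cong.smulSmul a c _).trans ?_)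
      rw [mul_comm]
      exact (Cong.smulSmul c a _).symm

theorem congLinear_bsubst_bsubst (x y : ℕ) (d v : Distr) :
    CongLinear fun u => bsubst y (bsubst x d u) v :=
  fun a b _ _ => (bsubst_add y _ _ v).trans
    (Cong.addCongr (bsubst_smul y a _ v) (bsubst_smul y b _ v))

theorem mem_domD_of_coeff_ne_zero : ∀ {d : Distr} {t : Term}, coeff d t ≠ 0 → t ∈ domD d
  | .zero, _, h => absurd rfl h
  | .single s, t, h => by
      by_cases hs : s = t
      · simp [domD, hs]
      · simp [coeff, hs] at h
  | .add d₁ d₂, t, h => by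
      rw [domD, Finset.mem_union]
      by_cases h₁ : coeff d₁ t = 0
      · exact .inr (mem_domD_of_coeff_ne_zero (by simpa [coeff, h₁] using h))
      · exact .inl (mem_domD_of_coeff_ne_zero h₁)
  | .smul _ d, _, h => mem_domD_of_coeff_ne_zero (d := d) (right_ne_zero_of_mul h)

theorem innerD_eq_sum_of_subset {v : Distr} (w : Distr) {S : Finset Term} (hS : domD v ⊆ S) :
    innerD v w = ∑ t ∈ S, conj (coeff v t) * coeff w t := by
  refine Finset.sum_subset hS fun t _ ht => ?_
  rw [not_imp_comm.mp mem_domD_of_coeff_ne_zero ht, map_zero, zero_mul]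

theorem innerD_congr {v v' w w' : Distr} (hv : ∀ t, coeff v t = coeff v' t)
    (hw : ∀ t, coeff w t = coeff w' t) : innerD v w = innerD v' w' := by
  rw [innerD_eq_sum_of_subset w (Finset.subset_union_left (s₂ := domD v')),
    innerD_eq_sum_of_subset w' (Finset.subset_union_right (s₁ := domD v))]
  simp only [hv, hw]

theorem innerD_conj_symm (v w : Distr) : conj (innerD w v) = innerD v w := by
  rw [innerD_eq_sum_of_subset v (Finset.subset_union_right (s₁ := domD v)),
    innerD_eq_sum_of_subset w (Finset.subset_union_left (s₂ := domD w)), map_sum]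
  simp only [map_mul, Complex.conj_conj, mul_comm]

theorem innerD_add_right (v w₁ w₂ : Distr) :
    innerD v (w₁.add w₂) = innerD v w₁ + innerD v w₂ := by
  simp only [innerD, coeff, mul_add, Finset.sum_add_distrib]

theorem innerD_smul_right (v w : Distr) (a : ℂ) : innerD v (.smul a w) = a * innerD v w := by
  simp only [innerD, coeff, Finset.mul_sum, mul_left_comm]

theorem innerD_add_left (v₁ v₂ w : Distr) :
    innerD (v₁.add v₂) w = innerD v₁ w + innerD v₂ w := by
  rw [← innerD_conj_symm, innerD_add_right, map_add, innerD_conj_symm, innerD_conj_symm]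

theorem innerD_smul_left (v w : Distr) (a : ℂ) : innerD (.smul a v) w = conj a * innerD v w := by
  rw [← innerD_conj_symm, innerD_smul_right, map_mul, innerD_conj_symm]

theorem innerD_combo (a b a' b' : ℂ) (p q p' q' : Distr) :
    innerD ((Distr.smul a p).add (Distr.smul b q)) ((Distr.smul a' p').add (Distr.smul b' q'))
      = conj a * a' * innerD p p' + conj a * b' * innerD p q'
        + conj b * a' * innerD q p' + conj b * b' * innerD q q' := by
  simp only [innerD_add_left, innerD_add_right, innerD_smul_left, innerD_smul_right]
  ring

theorem innerD_self_of_mem_sphere {d : Distr} (h : d ∈ Sphere) : innerD d d = 1 := by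
  have hre : (innerD d d).re = 1 := Real.sqrt_eq_one.mp h.2
  have him : (innerD d d).im = 0 := by
    have := congrArg Complex.im (innerD_conj_symm d d)
    rw [Complex.conj_im] at this
    linarith
  exact Complex.ext hre him

theorem combo_mem_sharpT {X : Set Distr} {u₁ u₂ : Distr} (h₁ : u₁ ∈ sharpT X)
    (h₂ : u₂ ∈ sharpT X) {a b : ℂ}
    (hnorm : innerD ((Distr.smul a u₁).add (Distr.smul b u₂))
      ((Distr.smul a u₁).add (Distr.smul b u₂)) = 1) :
    (Distr.smul a u₁).add (Distr.smul b u₂) ∈ sharpT X :=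
  ⟨.add (.smul a h₁.1) (.smul b h₂.1),
    ⟨⟨h₁.2.1.1, h₂.2.1.1⟩, by simp [fvD, h₁.2.1.2, h₂.2.1.2]⟩, by simp [normD, hnorm]⟩

/-- Replacing `α` by `-α` shows the restriction `-1 < re (α g)` costs nothing; `α = 1` and
`α = I` then determine `M`. -/
theorem eq_mul_of_forall_unit {g D M N : ℂ}
    (h : ∀ α : ℂ, conj α * α = 1 → -1 < (α * g).re →
      α * M + conj α * N = (α * g + conj α * conj g) * D) :
    M = g * D := by
  have key : ∀ α : ℂ, conj α * α = 1 → α * M + conj α * N = (α * g + conj α * conj g) * D := by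
    intro α hα
    rcases lt_or_ge (-1) (α * g).re with hlt | hge
    · exact h α hα hlt
    · have hneg := h (-α) (by simpa using hα) (by rw [neg_mul, Complex.neg_re]; linarith)
      simp only [map_neg] at hneg
      linear_combination -hneg
  have h₁ := key 1 (by simp)
  have hI := key Complex.I (by simp [Complex.conj_I])
  simp only [map_one, Complex.conj_I] at h₁ hI
  linear_combination (h₁ - Complex.I * hI + (M - N - g * D + conj g * D) * Complex.I_sq) / 2

theorem eq_innerD_mul_of_forall_combo {X : Set Distr} {u₁ u₂ : Distr} (h₁ : u₁ ∈ sharpT X)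
    (h₂ : u₂ ∈ sharpT X) {D M N : ℂ}
    (h : ∀ a b : ℂ, (Distr.smul a u₁).add (Distr.smul b u₂) ∈ sharpT X →
      conj a * a * D + conj a * b * M + conj b * a * N + conj b * b * D = D) :
    M = innerD u₁ u₂ * D := by
  refine eq_mul_of_forall_unit (N := N) fun α hα hpos => ?_
  set γ := innerD u₁ u₂
  -- `c = ‖u₁ + α u₂‖`, so that `(u₁ + α u₂) / c` lies in `♯X`
  obtain ⟨c, hc, hc2⟩ : ∃ c : ℝ, 0 < c ∧ (c : ℂ) ^ 2 = 2 + α * γ + conj α * conj γ := by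
    refine ⟨√(2 + 2 * (α * γ).re), Real.sqrt_pos.mpr (by linarith), ?_⟩
    rw [← Complex.ofReal_pow, Real.sq_sqrt (by linarith), add_assoc, ← map_mul, Complex.add_conj]
    push_cast
    ring
  have hc0 : (c : ℂ) ≠ 0 := Complex.ofReal_ne_zero.mpr hc.ne'
  have hnorm : innerD ((Distr.smul (c : ℂ)⁻¹ u₁).add (Distr.smul (α * (c : ℂ)⁻¹) u₂))
      ((Distr.smul (c : ℂ)⁻¹ u₁).add (Distr.smul (α * (c : ℂ)⁻¹) u₂)) = 1 := by
    rw [innerD_combo, innerD_self_of_mem_sphere h₁.2, innerD_self_of_mem_sphere h₂.2,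
      ← innerD_conj_symm u₂ u₁]
    simp only [map_mul, map_inv₀, Complex.conj_ofReal]
    field_simp
    linear_combination hα - hc2
  have hcombo := h _ _ (combo_mem_sharpT h₁ h₂ hnorm)
  simp only [map_mul, map_inv₀, Complex.conj_ofReal] at hcombo
  field_simp at hcombo
  linear_combination hcombo + D * hc2 - D * hα

/-- Evaluate both maps on the normalised combinations of `u₁` and `u₂` and polarise. -/
theorem innerD_eval_eq_innerD_mul_of_congLinear {X : Set Distr} {T₁ T₂ : Distr → Distr}
    (hT₁ : CongLinear T₁) (hT₂ : CongLinear T₂)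
    (hval : ∀ u ∈ sharpT X, (∃ w, IsValD w ∧ Eval (T₁ u) w) ∧ ∃ w, IsValD w ∧ Eval (T₂ u) w)
    {D : ℂ} (hdiag : ∀ u ∈ sharpT X, ∀ w w', IsValD w → IsValD w' →
      Eval (T₁ u) w → Eval (T₂ u) w' → innerD w w' = D)
    {u₁ u₂ w₁ w₂ : Distr} (hu₁ : u₁ ∈ sharpT X) (hu₂ : u₂ ∈ sharpT X)
    (hw₁ : IsValD w₁) (hw₂ : IsValD w₂) (he₁ : Eval (T₁ u₁) w₁) (he₂ : Eval (T₂ u₂) w₂) :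
    innerD w₁ w₂ = innerD u₁ u₂ * D := by
  obtain ⟨w₁', hw₁', he₁'⟩ := (hval u₂ hu₂).1
  obtain ⟨w₂', hw₂', he₂'⟩ := (hval u₁ hu₁).2
  refine eq_innerD_mul_of_forall_combo hu₁ hu₂ (N := innerD w₁' w₂') fun a b hU => ?_
  obtain ⟨W₁, hW₁, hE₁, hc₁⟩ := (he₁.combo he₁' a b).exists_of_cong (hT₁ a b u₁ u₂) ⟨hw₁, hw₁'⟩
  obtain ⟨W₂, hW₂, hE₂, hc₂⟩ := (he₂'.combo he₂ a b).exists_of_cong (hT₂ a b u₁ u₂) ⟨hw₂', hw₂⟩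
  have hUU := hdiag _ hU W₁ W₂ hW₁ hW₂ hE₁ hE₂
  rwa [innerD_congr hc₁ hc₂, innerD_combo, hdiag u₁ hu₁ w₁ w₂' hw₁ hw₂' he₁ he₂',
    hdiag u₂ hu₂ w₁' w₂ hw₁' hw₂ he₁' he₂] at hUU

theorem Realizes.exists_isValD {C : Set Distr} (hC : C ⊆ Sphere) {d : Distr}
    (h : Realizes C d) : ∃ w, IsValD w ∧ Eval d w :=
  let ⟨w, hw, he⟩ := h
  ⟨w, (hC hw).1.1, he⟩

theorem innerD_eval_eq_innerD_of_realizes {X C : Set Distr} (hC : C ⊆ Sphere)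
    {T : Distr → Distr} (hT : CongLinear T) (hreal : ∀ u ∈ sharpT X, Realizes C (T u))
    {u₁ u₂ w₁ w₂ : Distr} (hu₁ : u₁ ∈ sharpT X) (hu₂ : u₂ ∈ sharpT X)
    (hw₁ : IsValD w₁) (hw₂ : IsValD w₂) (he₁ : Eval (T u₁) w₁) (he₂ : Eval (T u₂) w₂) :
    innerD w₁ w₂ = innerD u₁ u₂ := by
  have hex u (hu : u ∈ sharpT X) := (hreal u hu).exists_isValD hC
  refine (innerD_eval_eq_innerD_mul_of_congLinear hT hT (fun u hu => ⟨hex u hu, hex u hu⟩)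
    ?_ hu₁ hu₂ hw₁ hw₂ he₁ he₂).trans (mul_one _)
  intro u hu w w' hw hw' he he'
  obtain ⟨z, hzC, hz⟩ := hreal u hu
  have hzval : IsValD z := (hC hzC).1.1
  rw [innerD_congr (he.coeff_eq hz hw hzval) (he'.coeff_eq hz hw' hzval)]
  exact innerD_self_of_mem_sphere (hC hzC)

theorem applySub_append (σ τ : Subst) (d : Distr) :
    applySub d (σ ++ τ) = applySub (applySub d σ) τ := by
  induction σ generalizing d with
  | nil => rfl
  | cons _ _ ih => exact ih _

/-- Typed terms multiply inner products (two variables). -/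
theorem typed_multiply_inner (Δ : Ctx) (hΔ : CtxUnitary Δ)
    (hnodup : (Δ.map Prod.fst).Nodup)
    (A B C : Set Distr) (hA : A ⊆ Sphere) (hB : B ⊆ Sphere) (hC : C ⊆ Sphere)
    (x y : ℕ) (hx : x ∉ Δ.map Prod.fst) (hy : y ∉ Δ.map Prod.fst) (hxy : x ≠ y)
    (s : Distr)
    (hjud : ValidJ (Δ ++ [(x, sharpT A), (y, sharpT B)]) s C)
    (σ : Subst) (hσ : SubMem σ Δ)
    (u₁ u₂ : Distr) (hu₁ : u₁ ∈ sharpT A) (hu₂ : u₂ ∈ sharpT A)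
    (v₁ v₂ : Distr) (hv₁ : v₁ ∈ sharpT B) (hv₂ : v₂ ∈ sharpT B) :
    ∃ w₁ w₂ : Distr, w₁ ∈ C ∧ w₂ ∈ C ∧
      Eval (applySub s (σ ++ [(x, u₁), (y, v₁)])) w₁ ∧
      Eval (applySub s (σ ++ [(x, u₂), (y, v₂)])) w₂ ∧
      innerD w₁ w₂ = innerD u₁ u₂ * innerD v₁ v₂ := by
  set T : Distr → Distr → Distr := fun u v => bsubst y (bsubst x (applySub s σ) u) v
  have hT u v : applySub s (σ ++ [(x, u), (y, v)]) = T u v := applySub_append _ _ _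
  have hreal : ∀ u ∈ sharpT A, ∀ v ∈ sharpT B, Realizes C (T u v) := fun u hu v hv =>
    hT u v ▸ hjud.2.2 _ (List.rel_append hσ (.cons ⟨rfl, hu⟩ (.cons ⟨rfl, hv⟩ .nil)))
  obtain ⟨w₁, hw₁C, he₁⟩ := hreal u₁ hu₁ v₁ hv₁
  obtain ⟨w₂, hw₂C, he₂⟩ := hreal u₂ hu₂ v₂ hv₂
  refine ⟨w₁, w₂, hw₁C, hw₂C, hT u₁ v₁ ▸ he₁, hT u₂ v₂ ▸ he₂, ?_⟩
  refine innerD_eval_eq_innerD_mul_of_congLinear (T₁ := (T · v₁)) (T₂ := (T · v₂))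
    (congLinear_bsubst_bsubst x y _ v₁) (congLinear_bsubst_bsubst x y _ v₂)
    (fun u hu => ⟨(hreal u hu v₁ hv₁).exists_isValD hC, (hreal u hu v₂ hv₂).exists_isValD hC⟩)
    ?_ hu₁ hu₂ (hC hw₁C).1.1 (hC hw₂C).1.1 he₁ he₂
  intro u hu w w' hw hw' he he'
  exact innerD_eval_eq_innerD_of_realizes hC (congLinear_bsubst y _) (hreal u hu) hv₁ hv₂
    hw hw' he he'

end LinAlg
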